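/- arXiv:2411.04012 — 2 statements merged into one kernel-verified Lean document; each statement's English description precedes it below -/
import Mathlib

section
/- The pairs of spatial partitions r ∈ P^{(m)}(1, ∘•) and s ∈ P^{(m)}(1, •∘) satisfying the conjugate equations (r* ⊗ id_∘)·(id_∘ ⊗ s) = id_∘ and (s* ⊗ id_•)·(id_• ⊗ r) = id_• are exactly those of the form r = σ_{∘•} and s = (σ⁻¹)_{•∘} for a permutation σ ∈ S_m, where σ_{xy} is the partition with 2m lower points whose blocks are {(1,i),(2,σ(i))} for 1 ≤ i ≤ m. -/
/-- A (colored) spatial partition on `m` levels with upper colors `x` and lower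
colors `y` (colors modelled as `Bool`: `false = ∘` white, `true = •` black): a set
partition of the points `({1,…,|x|} ⊕ {1,…,|y|}) × {1,…,m}`, encoded as a setoid. -/
structure SPartOn (m : ℕ) (x y : List Bool) where
  rel : Setoid ((Fin x.length ⊕ Fin y.length) × Fin m)

namespace SPartOn

variable {m : ℕ}

/-- The disjoint union of two setoids. -/
def sumSetoid {α β : Type*} (s : Setoid α) (t : Setoid β) : Setoid (α ⊕ β) where
  r a b :=
    match a, b with
    | .inl a, .inl b => s.r a b
    | .inr a, .inr b => t.r a b
    | _, _ => False
  iseqv := by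
    refine ⟨fun a => ?_, fun {a b} h => ?_, fun {a b c} h₁ h₂ => ?_⟩
    · cases a
      · exact s.iseqv.refl _
      · exact t.iseqv.refl _
    · cases a <;> cases b
      · exact s.iseqv.symm h
      · exact h.elim
      · exact h.elim
      · exact t.iseqv.symm h
    · cases a <;> cases b <;> cases c <;>
        first
          | exact (h₁ : False).elim
          | exact (h₂ : False).elim
          | exact s.iseqv.trans h₁ h₂
          | exact t.iseqv.trans h₁ h₂

/-- The involution `p ↦ p*`: swap upper and lower points. -/
def star {x y : List Bool} (p : SPartOn m x y) : SPartOn m y x :=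
  ⟨Setoid.comap (fun a => (a.1.swap, a.2)) p.rel⟩

/-- Splitting an index of a concatenated word into the two parts. -/
def splitIdx (x w : List Bool) : Fin (x ++ w).length → Fin x.length ⊕ Fin w.length :=
  fun i => finSumFinEquiv.symm (Fin.cast (by simp) i)

/-- Reindexing map for the tensor product of spatial partitions. -/
def tensorMap (x y w z : List Bool) (m : ℕ) :
    (Fin (x ++ w).length ⊕ Fin (y ++ z).length) × Fin m →
      ((Fin x.length ⊕ Fin y.length) × Fin m) ⊕ ((Fin w.length ⊕ Fin z.length) × Fin m) :=
  fun a =>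
    match a.1 with
    | .inl i =>
        match splitIdx x w i with
        | .inl i' => .inl ((.inl i'), a.2)
        | .inr i' => .inr ((.inl i'), a.2)
    | .inr j =>
        match splitIdx y z j with
        | .inl j' => .inl ((.inr j'), a.2)
        | .inr j' => .inr ((.inr j'), a.2)

/-- The tensor product `p ⊗ q` of spatial partitions: place `p` and `q` next to
each other. -/
def tensor {x y w z : List Bool} (p : SPartOn m x y) (q : SPartOn m w z) :
    SPartOn m (x ++ w) (y ++ z) :=
  ⟨Setoid.comap (tensorMap x y w z m) (sumSetoid p.rel q.rel)⟩

/-- The pushforward of the relation of a setoid along a function. -/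
def liftRel {γ δ : Type*} (f : γ → δ) (s : Setoid γ) : δ → δ → Prop :=
  fun a b => ∃ u v, s.r u v ∧ f u = a ∧ f v = b

/-- The setoid on the upper, middle and lower points generated by two stacked
spatial partitions `q ∈ P(x,y)` (on top) and `p ∈ P(y,z)` (below). -/
def joinSetoid {x y z : List Bool} (p : SPartOn m y z) (q : SPartOn m x y) :
    Setoid ((Fin x.length ⊕ Fin y.length ⊕ Fin z.length) × Fin m) :=
  sInf {s |
    (∀ u v, liftRel (fun a => (Sum.map id Sum.inl a.1, a.2)) q.rel u v → s.r u v) ∧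
    (∀ u v, liftRel (fun a => (Sum.inr a.1, a.2)) p.rel u v → s.r u v)}

/-- The composition `pq` of spatial partitions `q ∈ P(x,y)` and `p ∈ P(y,z)`:
place `q` on top of `p`, identify the lower points of `q` with the upper points of
`p`, remove the middle points (and closed loops) and restrict to the remaining
points. -/
def comp {x y z : List Bool} (p : SPartOn m y z) (q : SPartOn m x y) : SPartOn m x z :=
  ⟨Setoid.comap (fun a => (Sum.map id Sum.inr a.1, a.2)) (joinSetoid p q)⟩

/-- The identity partition `id_x ∈ P(x,x)`: each upper point is connected with the
corresponding lower point. -/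
def idPart (m : ℕ) (x : List Bool) : SPartOn m x x :=
  ⟨Setoid.ker (fun a => (Sum.elim id id a.1, a.2))⟩

/-- The partition `σ_{cd} ∈ P^{(m)}(1, cd)` associated to `σ ∈ S_m`: no upper
points, two lower columns colored `c` and `d`, and blocks `{(1,i), (2,σ i)}`. -/
def sigmaPart (m : ℕ) (σ : Equiv.Perm (Fin m)) (c d : Bool) : SPartOn m [] [c, d] :=
  ⟨Setoid.ker
    (fun a : (Fin ([] : List Bool).length ⊕ Fin ([c, d] : List Bool).length) × Fin m =>
      Sum.elim (fun i => Fin.elim0 i)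
        (fun j => if (j : ℕ) = 0 then σ a.2 else a.2) a.1)⟩

end SPartOn

namespace SPartOn

variable {m : ℕ}

theorem SPext {x y : List Bool} {p q : SPartOn m x y}
    (h : ∀ a b, p.rel.r a b ↔ q.rel.r a b) : p = q := by
  cases p; cases q
  simp only [mk.injEq]
  exact Setoid.ext h

theorem fin1_eq {n : ℕ} (h : n = 1) (i j : Fin n) : i = j := by
  subst h; exact Subsingleton.elim i j

/-- Points in the join space: top point at level `k`. -/
def pT (k : Fin m) : (Fin 1 ⊕ Fin 3 ⊕ Fin 1) × Fin m := (.inl ⟨0, by omega⟩, k)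
/-- Middle point in column `j` at level `k`. -/
def pM (j : Fin 3) (k : Fin m) : (Fin 1 ⊕ Fin 3 ⊕ Fin 1) × Fin m := (.inr (.inl j), k)
/-- Bottom point at level `k`. -/
def pB (k : Fin m) : (Fin 1 ⊕ Fin 3 ⊕ Fin 1) × Fin m := (.inr (.inr ⟨0, by omega⟩), k)

section OneEq

variable {c d : Bool} (r : SPartOn m [] [c, d]) (s : SPartOn m [] [d, c])

/-- The generating set of setoids used in `joinSetoid` for the conjugate-equation
composition. -/
def GS1 : Set (Setoid ((Fin 1 ⊕ Fin 3 ⊕ Fin 1) × Fin m)) :=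
  {t | (∀ u v, liftRel (fun a => (Sum.map id Sum.inl a.1, a.2))
          (tensor (idPart m [c]) s : SPartOn m [c] [c, d, c]).rel u v → t.r u v) ∧
       (∀ u v, liftRel (fun a => (Sum.inr a.1, a.2))
          (tensor (star r) (idPart m [c]) : SPartOn m [c, d, c] [c]).rel u v → t.r u v)}

theorem comp_rel_iff1 (a b : (Fin 1 ⊕ Fin 1) × Fin m) :
    (comp (tensor (star r) (idPart m [c]) : SPartOn m [c, d, c] [c])
          (tensor (idPart m [c]) s : SPartOn m [c] [c, d, c])).rel.r a b ↔
      ∀ t ∈ GS1 r s, t.r (Sum.map id Sum.inr a.1, a.2) (Sum.map id Sum.inr b.1, b.2) :=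
  Iff.rfl

theorem idPart_one_rel_iff (cc : Bool) (a b : (Fin 1 ⊕ Fin 1) × Fin m) :
    (idPart m [cc]).rel.r a b ↔ a.2 = b.2 := by
  constructor
  · intro h
    have he : ((Sum.elim id id a.1 : Fin 1), a.2) = ((Sum.elim id id b.1 : Fin 1), b.2) := h
    exact (Prod.ext_iff.mp he).2
  · intro h
    show ((Sum.elim id id a.1 : Fin 1), a.2) = ((Sum.elim id id b.1 : Fin 1), b.2)
    exact Prod.ext_iff.mpr ⟨fin1_eq rfl _ _, h⟩

end OneEq

end SPartOn
namespace SPartOn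

variable {m : ℕ} {c d : Bool}

theorem mem_GS1 (r : SPartOn m [] [c, d]) (s : SPartOn m [] [d, c])
    (t : Setoid ((Fin 1 ⊕ Fin 3 ⊕ Fin 1) × Fin m))
    (hT : ∀ k, t.r (pT k) (pM ⟨0, by omega⟩ k))
    (hB : ∀ k, t.r (pM ⟨2, by omega⟩ k) (pB k))
    (hr : ∀ (i j : Fin 2) (u v : Fin m),
      r.rel.r (.inr i, u) (.inr j, v) →
        t.r (pM (Fin.castLE (by omega) i) u) (pM (Fin.castLE (by omega) j) v))
    (hs : ∀ (i j : Fin 2) (u v : Fin m),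
      s.rel.r (.inr i, u) (.inr j, v) →
        t.r (pM (Fin.succ i) u) (pM (Fin.succ j) v)) :
    t ∈ GS1 r s := by
  constructor
  · rintro u v ⟨⟨i, k⟩, ⟨i', k'⟩, hrel, rfl, rfl⟩
    rcases i with ⟨(_|iv), hi⟩ | ⟨(_|(_|(_|jv))), hj⟩
    · -- i = T
      rcases i' with ⟨(_|iv'), hi'⟩ | ⟨(_|(_|(_|jv'))), hj'⟩
      · -- T T
        have he : ((⟨0, by simp⟩ : Fin 1), k) = ((⟨0, by simp⟩ : Fin 1), k') := hrel
        injection he with h1 h2; subst h2; exact t.iseqv.refl _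
      · exact absurd (show iv' + 1 < 1 from hi') (by omega)
      · -- T M0
        have he : ((⟨0, by simp⟩ : Fin 1), k) = ((⟨0, by simp⟩ : Fin 1), k') := hrel
        injection he with h1 h2; subst h2; exact hT k
      · exact (hrel : False).elim
      · exact (hrel : False).elim
      · exact absurd (show jv' + 3 < 3 from hj') (by omega)
    · exact absurd (show iv + 1 < 1 from hi) (by omega)
    · -- i = M0
      rcases i' with ⟨(_|iv'), hi'⟩ | ⟨(_|(_|(_|jv'))), hj'⟩
      · -- M0 T
        have he : ((⟨0, by simp⟩ : Fin 1), k) = ((⟨0, by simp⟩ : Fin 1), k') := hrel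
        injection he with h1 h2; subst h2; exact t.iseqv.symm (hT k)
      · exact absurd (show iv' + 1 < 1 from hi') (by omega)
      · -- M0 M0
        have he : ((⟨0, by simp⟩ : Fin 1), k) = ((⟨0, by simp⟩ : Fin 1), k') := hrel
        injection he with h1 h2; subst h2; exact t.iseqv.refl _
      · exact (hrel : False).elim
      · exact (hrel : False).elim
      · exact absurd (show jv' + 3 < 3 from hj') (by omega)
    · -- i = M1
      rcases i' with ⟨(_|iv'), hi'⟩ | ⟨(_|(_|(_|jv'))), hj'⟩
      · exact (hrel : False).elim
      · exact absurd (show iv' + 1 < 1 from hi') (by omega)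
      · exact (hrel : False).elim
      · exact hs ⟨0, by simp⟩ ⟨0, by simp⟩ k k' hrel
      · exact hs ⟨0, by simp⟩ ⟨1, by simp⟩ k k' hrel
      · exact absurd (show jv' + 3 < 3 from hj') (by omega)
    · -- i = M2
      rcases i' with ⟨(_|iv'), hi'⟩ | ⟨(_|(_|(_|jv'))), hj'⟩
      · exact (hrel : False).elim
      · exact absurd (show iv' + 1 < 1 from hi') (by omega)
      · exact (hrel : False).elim
      · exact hs ⟨1, by simp⟩ ⟨0, by simp⟩ k k' hrel
      · exact hs ⟨1, by simp⟩ ⟨1, by simp⟩ k k' hrel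
      · exact absurd (show jv' + 3 < 3 from hj') (by omega)
    · exact absurd (show jv + 3 < 3 from hj) (by omega)
  · rintro u v ⟨⟨i, k⟩, ⟨i', k'⟩, hrel, rfl, rfl⟩
    rcases i with ⟨(_|(_|(_|jv))), hj⟩ | ⟨(_|iv), hi⟩
    · -- i = M0 (r column 0)
      rcases i' with ⟨(_|(_|(_|jv'))), hj'⟩ | ⟨(_|iv'), hi'⟩
      · exact hr ⟨0, by simp⟩ ⟨0, by simp⟩ k k' hrel
      · exact hr ⟨0, by simp⟩ ⟨1, by simp⟩ k k' hrel
      · exact (hrel : False).elim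
      · exact absurd (show jv' + 3 < 3 from hj') (by omega)
      · exact (hrel : False).elim
      · exact absurd (show iv' + 1 < 1 from hi') (by omega)
    · -- i = M1 (r column 1)
      rcases i' with ⟨(_|(_|(_|jv'))), hj'⟩ | ⟨(_|iv'), hi'⟩
      · exact hr ⟨1, by simp⟩ ⟨0, by simp⟩ k k' hrel
      · exact hr ⟨1, by simp⟩ ⟨1, by simp⟩ k k' hrel
      · exact (hrel : False).elim
      · exact absurd (show jv' + 3 < 3 from hj') (by omega)
      · exact (hrel : False).elim
      · exact absurd (show iv' + 1 < 1 from hi') (by omega)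
    · -- i = M2 (id upper)
      rcases i' with ⟨(_|(_|(_|jv'))), hj'⟩ | ⟨(_|iv'), hi'⟩
      · exact (hrel : False).elim
      · exact (hrel : False).elim
      · -- M2 M2
        have he : ((⟨0, by simp⟩ : Fin 1), k) = ((⟨0, by simp⟩ : Fin 1), k') := hrel
        injection he with h1 h2; subst h2; exact t.iseqv.refl _
      · exact absurd (show jv' + 3 < 3 from hj') (by omega)
      · -- M2 B
        have he : ((⟨0, by simp⟩ : Fin 1), k) = ((⟨0, by simp⟩ : Fin 1), k') := hrel
        injection he with h1 h2; subst h2; exact hB k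
      · exact absurd (show iv' + 1 < 1 from hi') (by omega)
    · exact absurd (show jv + 3 < 3 from hj) (by omega)
    · -- i = B (id lower)
      rcases i' with ⟨(_|(_|(_|jv'))), hj'⟩ | ⟨(_|iv'), hi'⟩
      · exact (hrel : False).elim
      · exact (hrel : False).elim
      · -- B M2
        have he : ((⟨0, by simp⟩ : Fin 1), k) = ((⟨0, by simp⟩ : Fin 1), k') := hrel
        injection he with h1 h2; subst h2; exact t.iseqv.symm (hB k)
      · exact absurd (show jv' + 3 < 3 from hj') (by omega)
      · -- B B
        have he : ((⟨0, by simp⟩ : Fin 1), k) = ((⟨0, by simp⟩ : Fin 1), k') := hrel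
        injection he with h1 h2; subst h2; exact t.iseqv.refl _
      · exact absurd (show iv' + 1 < 1 from hi') (by omega)
    · exact absurd (show iv + 1 < 1 from hi) (by omega)

end SPartOn
namespace SPartOn

variable {m : ℕ} {c d : Bool}

/-- Column-0 triviality. -/
def Triv0 (p : SPartOn m [] [c, d]) : Prop :=
  ∀ u v : Fin m, p.rel.r (.inr ⟨0, by simp⟩, u) (.inr ⟨0, by simp⟩, v) → u = v

/-- Column-1 triviality. -/
def Triv1 (p : SPartOn m [] [c, d]) : Prop :=
  ∀ u v : Fin m, p.rel.r (.inr ⟨1, by simp⟩, u) (.inr ⟨1, by simp⟩, v) → u = v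

theorem claimA (r : SPartOn m [] [c, d]) (s : SPartOn m [] [d, c])
    (H : comp (tensor (star r) (idPart m [c]) : SPartOn m [c, d, c] [c])
          (tensor (idPart m [c]) s : SPartOn m [c] [c, d, c]) = idPart m [c]) :
    Triv0 r := by
  intro u v hruv
  have hc : (comp (tensor (star r) (idPart m [c]) : SPartOn m [c, d, c] [c])
      (tensor (idPart m [c]) s : SPartOn m [c] [c, d, c])).rel.r
      (.inl ⟨0, by simp⟩, u) (.inl ⟨0, by simp⟩, v) := by
    refine (comp_rel_iff1 r s _ _).mpr ?_
    intro t ht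
    have e1 : t.r (pT u) (pM ⟨0, by omega⟩ u) :=
      ht.1 _ _ ⟨(.inl ⟨0, Nat.le.refl⟩, u), (.inr ⟨0, Nat.le.step (Nat.le.step Nat.le.refl)⟩, u), rfl, rfl, rfl⟩
    have e1' : t.r (pT v) (pM ⟨0, by omega⟩ v) :=
      ht.1 _ _ ⟨(.inl ⟨0, Nat.le.refl⟩, v), (.inr ⟨0, Nat.le.step (Nat.le.step Nat.le.refl)⟩, v), rfl, rfl, rfl⟩
    have e2 : t.r (pM ⟨0, by omega⟩ u) (pM ⟨0, by omega⟩ v) :=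
      ht.2 _ _ ⟨(.inl ⟨0, Nat.le.step (Nat.le.step Nat.le.refl)⟩, u), (.inl ⟨0, Nat.le.step (Nat.le.step Nat.le.refl)⟩, v), hruv, rfl, rfl⟩
    exact t.iseqv.trans e1 (t.iseqv.trans e2 (t.iseqv.symm e1'))
  rw [H] at hc
  exact (idPart_one_rel_iff c _ _).mp hc

theorem claimB (r : SPartOn m [] [c, d]) (s : SPartOn m [] [d, c])
    (H : comp (tensor (star r) (idPart m [c]) : SPartOn m [c, d, c] [c])
          (tensor (idPart m [c]) s : SPartOn m [c] [c, d, c]) = idPart m [c]) :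
    Triv1 s := by
  intro u v hsuv
  have hc : (comp (tensor (star r) (idPart m [c]) : SPartOn m [c, d, c] [c])
      (tensor (idPart m [c]) s : SPartOn m [c] [c, d, c])).rel.r
      (.inr ⟨0, by simp⟩, u) (.inr ⟨0, by simp⟩, v) := by
    refine (comp_rel_iff1 r s _ _).mpr ?_
    intro t ht
    have e1 : t.r (pM ⟨2, by omega⟩ u) (pB u) :=
      ht.2 _ _ ⟨(.inl ⟨2, Nat.le.refl⟩, u), (.inr ⟨0, Nat.le.refl⟩, u), rfl, rfl, rfl⟩
    have e1' : t.r (pM ⟨2, by omega⟩ v) (pB v) :=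
      ht.2 _ _ ⟨(.inl ⟨2, Nat.le.refl⟩, v), (.inr ⟨0, Nat.le.refl⟩, v), rfl, rfl, rfl⟩
    have e2 : t.r (pM ⟨2, by omega⟩ u) (pM ⟨2, by omega⟩ v) :=
      ht.1 _ _ ⟨(.inr ⟨2, Nat.le.refl⟩, u), (.inr ⟨2, Nat.le.refl⟩, v), hsuv, rfl, rfl⟩
    exact t.iseqv.trans (t.iseqv.symm e1) (t.iseqv.trans e2 e1')
  rw [H] at hc
  exact (idPart_one_rel_iff c _ _).mp hc

/-- The classifying predicate used to extract the block structure at level `k`. -/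
def Ffun (r : SPartOn m [] [c, d]) (s : SPartOn m [] [d, c]) (k : Fin m) :
    (Fin 1 ⊕ Fin 3 ⊕ Fin 1) × Fin m → Prop := fun a =>
  match a.1 with
  | .inl _ => r.rel.r (.inr ⟨0, by simp⟩, k) (.inr ⟨0, by simp⟩, a.2)
  | .inr (.inl j) =>
      if (j : ℕ) = 0 then r.rel.r (.inr ⟨0, by simp⟩, k) (.inr ⟨0, by simp⟩, a.2)
      else if (j : ℕ) = 1 then r.rel.r (.inr ⟨0, by simp⟩, k) (.inr ⟨1, by simp⟩, a.2)
      else ∃ j', r.rel.r (.inr ⟨0, by simp⟩, k) (.inr ⟨1, by simp⟩, j') ∧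
        s.rel.r (.inr ⟨0, by simp⟩, j') (.inr ⟨1, by simp⟩, a.2)
  | .inr (.inr _) => ∃ j', r.rel.r (.inr ⟨0, by simp⟩, k) (.inr ⟨1, by simp⟩, j') ∧
      s.rel.r (.inr ⟨0, by simp⟩, j') (.inr ⟨1, by simp⟩, a.2)

theorem claimC (r : SPartOn m [] [c, d]) (s : SPartOn m [] [d, c])
    (H : comp (tensor (star r) (idPart m [c]) : SPartOn m [c, d, c] [c])
          (tensor (idPart m [c]) s : SPartOn m [c] [c, d, c]) = idPart m [c])
    (hs0 : Triv0 s) (hs1 : Triv1 s) (k : Fin m) :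
    ∃ j, r.rel.r (.inr ⟨0, by simp⟩, k) (.inr ⟨1, by simp⟩, j) ∧
      s.rel.r (.inr ⟨0, by simp⟩, j) (.inr ⟨1, by simp⟩, k) := by
  have hker : Setoid.ker (Ffun r s k) ∈ GS1 r s := by
    apply mem_GS1
    · intro k'; exact rfl
    · intro k'; exact rfl
    · intro i j u v hruv
      rcases i with ⟨(_|(_|iv)), hi⟩
      · rcases j with ⟨(_|(_|jv)), hj⟩
        · -- (0,0)
          show r.rel.r (.inr ⟨0, by simp⟩, k) (.inr ⟨0, by simp⟩, u) =
            r.rel.r (.inr ⟨0, by simp⟩, k) (.inr ⟨0, by simp⟩, v)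
          exact propext ⟨fun h => r.rel.iseqv.trans h hruv,
            fun h => r.rel.iseqv.trans h (r.rel.iseqv.symm hruv)⟩
        · -- (0,1)
          show r.rel.r (.inr ⟨0, by simp⟩, k) (.inr ⟨0, by simp⟩, u) =
            r.rel.r (.inr ⟨0, by simp⟩, k) (.inr ⟨1, by simp⟩, v)
          exact propext ⟨fun h => r.rel.iseqv.trans h hruv,
            fun h => r.rel.iseqv.trans h (r.rel.iseqv.symm hruv)⟩
        · exact absurd (show jv + 2 < 2 from hj) (by omega)
      · rcases j with ⟨(_|(_|jv)), hj⟩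
        · -- (1,0)
          show r.rel.r (.inr ⟨0, by simp⟩, k) (.inr ⟨1, by simp⟩, u) =
            r.rel.r (.inr ⟨0, by simp⟩, k) (.inr ⟨0, by simp⟩, v)
          exact propext ⟨fun h => r.rel.iseqv.trans h hruv,
            fun h => r.rel.iseqv.trans h (r.rel.iseqv.symm hruv)⟩
        · -- (1,1)
          show r.rel.r (.inr ⟨0, by simp⟩, k) (.inr ⟨1, by simp⟩, u) =
            r.rel.r (.inr ⟨0, by simp⟩, k) (.inr ⟨1, by simp⟩, v)
          exact propext ⟨fun h => r.rel.iseqv.trans h hruv,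
            fun h => r.rel.iseqv.trans h (r.rel.iseqv.symm hruv)⟩
        · exact absurd (show jv + 2 < 2 from hj) (by omega)
      · exact absurd (show iv + 2 < 2 from hi) (by omega)
    · intro i j u v hsuv
      rcases i with ⟨(_|(_|iv)), hi⟩
      · rcases j with ⟨(_|(_|jv)), hj⟩
        · -- (0,0): s column 0
          have huv : u = v := hs0 u v hsuv
          subst huv; rfl
        · -- (0,1)
          show r.rel.r (.inr ⟨0, by simp⟩, k) (.inr ⟨1, by simp⟩, u) =
            (∃ j', r.rel.r (.inr ⟨0, by simp⟩, k) (.inr ⟨1, by simp⟩, j') ∧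
              s.rel.r (.inr ⟨0, by simp⟩, j') (.inr ⟨1, by simp⟩, v))
          refine propext ⟨fun h => ⟨u, h, hsuv⟩, fun ⟨j', h1, h2⟩ => ?_⟩
          have : j' = u := hs0 j' u (s.rel.iseqv.trans h2 (s.rel.iseqv.symm hsuv))
          exact this ▸ h1
        · exact absurd (show jv + 2 < 2 from hj) (by omega)
      · rcases j with ⟨(_|(_|jv)), hj⟩
        · -- (1,0)
          show (∃ j', r.rel.r (.inr ⟨0, by simp⟩, k) (.inr ⟨1, by simp⟩, j') ∧
              s.rel.r (.inr ⟨0, by simp⟩, j') (.inr ⟨1, by simp⟩, u)) =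
            r.rel.r (.inr ⟨0, by simp⟩, k) (.inr ⟨1, by simp⟩, v)
          refine propext ⟨fun ⟨j', h1, h2⟩ => ?_, fun h => ⟨v, h, s.rel.iseqv.symm hsuv⟩⟩
          have : j' = v := hs0 j' v (s.rel.iseqv.trans h2 hsuv)
          exact this ▸ h1
        · -- (1,1): s column 1
          have huv : u = v := hs1 u v hsuv
          subst huv; rfl
        · exact absurd (show jv + 2 < 2 from hj) (by omega)
      · exact absurd (show iv + 2 < 2 from hi) (by omega)
  have hid : (idPart m [c]).rel.r ((.inl ⟨0, by simp⟩ : Fin 1 ⊕ Fin 1), k)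
      (.inr ⟨0, by simp⟩, k) := (idPart_one_rel_iff c _ _).mpr rfl
  rw [← H] at hid
  have hF := (comp_rel_iff1 r s _ _).mp hid _ hker
  -- hF : Ffun r s k (pT k) = Ffun r s k (pB k)
  have hF' : Ffun r s k (pT k) = Ffun r s k (pB k) := hF
  have hstart : Ffun r s k (pT k) := r.rel.iseqv.refl _
  have hend : Ffun r s k (pB k) := hF' ▸ hstart
  exact hend

end SPartOn
namespace SPartOn

variable {m : ℕ} {c d : Bool}

/-- The classifying map for the join setoid of the conjugate-equation composition
when `r = σ_{cd}`, `s = (σ⁻¹)_{dc}`. -/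
def Gfun (σ : Equiv.Perm (Fin m)) : (Fin 1 ⊕ Fin 3 ⊕ Fin 1) × Fin m → Fin m := fun a =>
  match a.1 with
  | .inr (.inl j) => if (j : ℕ) = 1 then σ⁻¹ a.2 else a.2
  | _ => a.2

theorem eq_of_sigma (σ : Equiv.Perm (Fin m)) :
    comp (tensor (star (sigmaPart m σ c d)) (idPart m [c]) : SPartOn m [c, d, c] [c])
        (tensor (idPart m [c]) (sigmaPart m σ⁻¹ d c) : SPartOn m [c] [c, d, c]) =
      idPart m [c] := by
  have hker : Setoid.ker (Gfun σ) ∈ GS1 (sigmaPart m σ c d) (sigmaPart m σ⁻¹ d c) := by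
    apply mem_GS1
    · intro k'; exact rfl
    · intro k'; exact rfl
    · intro i j u v hruv
      rcases i with ⟨(_|(_|iv)), hi⟩
      · rcases j with ⟨(_|(_|jv)), hj⟩
        · -- (0,0): σ u = σ v ⊢ u = v
          have h' : σ u = σ v := hruv
          show u = v
          exact σ.injective h'
        · -- (0,1): σ u = v ⊢ u = σ⁻¹ v
          have h' : σ u = v := hruv
          show u = σ⁻¹ v
          rw [← h', Equiv.Perm.inv_def, Equiv.symm_apply_apply]
        · exact absurd (show jv + 2 < 2 from hj) (by omega)
      · rcases j with ⟨(_|(_|jv)), hj⟩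
        · -- (1,0): u = σ v ⊢ σ⁻¹ u = v
          have h' : u = σ v := hruv
          show σ⁻¹ u = v
          rw [h', Equiv.Perm.inv_def, Equiv.symm_apply_apply]
        · -- (1,1): u = v ⊢ σ⁻¹ u = σ⁻¹ v
          have h' : u = v := hruv
          show σ⁻¹ u = σ⁻¹ v
          rw [h']
        · exact absurd (show jv + 2 < 2 from hj) (by omega)
      · exact absurd (show iv + 2 < 2 from hi) (by omega)
    · intro i j u v hsuv
      rcases i with ⟨(_|(_|iv)), hi⟩
      · rcases j with ⟨(_|(_|jv)), hj⟩
        · -- (0,0): σ⁻¹ u = σ⁻¹ v ⊢ σ⁻¹ u = σ⁻¹ v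
          exact (hsuv : σ⁻¹ u = σ⁻¹ v)
        · -- (0,1): σ⁻¹ u = v ⊢ σ⁻¹ u = v
          exact (hsuv : σ⁻¹ u = v)
        · exact absurd (show jv + 2 < 2 from hj) (by omega)
      · rcases j with ⟨(_|(_|jv)), hj⟩
        · -- (1,0): u = σ⁻¹ v ⊢ u = σ⁻¹ v
          exact (hsuv : u = σ⁻¹ v)
        · -- (1,1)
          exact (hsuv : u = v)
        · exact absurd (show jv + 2 < 2 from hj) (by omega)
      · exact absurd (show iv + 2 < 2 from hi) (by omega)
  apply SPext
  intro a b
  rw [idPart_one_rel_iff c a b]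
  constructor
  · intro hc
    have hg := (comp_rel_iff1 (sigmaPart m σ c d) (sigmaPart m σ⁻¹ d c) a b).mp hc _ hker
    obtain ⟨ia, ka⟩ := a
    obtain ⟨ib, kb⟩ := b
    rcases ia with ia | ia <;> rcases ib with ib | ib <;> exact hg
  · intro hab
    refine (comp_rel_iff1 (sigmaPart m σ c d) (sigmaPart m σ⁻¹ d c) a b).mpr ?_
    intro t ht
    obtain ⟨ia, ka⟩ := a
    obtain ⟨ib, kb⟩ := b
    have hab' : ka = kb := hab
    subst hab'
    have chain : t.r (pT ka) (pB ka) := by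
      have e1 : t.r (pT ka) (pM ⟨0, by omega⟩ ka) :=
        ht.1 _ _ ⟨(.inl ⟨0, Nat.le.refl⟩, ka),
          (.inr ⟨0, Nat.le.step (Nat.le.step Nat.le.refl)⟩, ka), rfl, rfl, rfl⟩
      have e2 : t.r (pM ⟨0, by omega⟩ ka) (pM ⟨1, by omega⟩ (σ ka)) :=
        ht.2 _ _ ⟨(.inl ⟨0, Nat.le.step (Nat.le.step Nat.le.refl)⟩, ka),
          (.inl ⟨1, Nat.le.step Nat.le.refl⟩, σ ka), rfl, rfl, rfl⟩
      have e3 : t.r (pM ⟨1, by omega⟩ (σ ka)) (pM ⟨2, by omega⟩ ka) :=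
        ht.1 _ _ ⟨(.inr ⟨1, Nat.le.step Nat.le.refl⟩, σ ka),
          (.inr ⟨2, Nat.le.refl⟩, ka), Equiv.symm_apply_apply σ ka, rfl, rfl⟩
      have e4 : t.r (pM ⟨2, by omega⟩ ka) (pB ka) :=
        ht.2 _ _ ⟨(.inl ⟨2, Nat.le.refl⟩, ka), (.inr ⟨0, Nat.le.refl⟩, ka), rfl, rfl, rfl⟩
      exact t.iseqv.trans e1 (t.iseqv.trans e2 (t.iseqv.trans e3 e4))
    rcases ia with ia | ia <;> rcases ib with ib | ib
    · have h1 : ia = ib := fin1_eq rfl ia ib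
      subst h1; exact t.iseqv.refl _
    · have h1 : ia = ⟨0, Nat.le.refl⟩ := fin1_eq rfl ia _
      have h2 : ib = ⟨0, Nat.le.refl⟩ := fin1_eq rfl ib _
      subst h1; subst h2
      exact chain
    · have h1 : ia = ⟨0, Nat.le.refl⟩ := fin1_eq rfl ia _
      have h2 : ib = ⟨0, Nat.le.refl⟩ := fin1_eq rfl ib _
      subst h1; subst h2
      exact t.iseqv.symm chain
    · have h1 : ia = ib := fin1_eq rfl ia ib
      subst h1; exact t.iseqv.refl _

end SPartOn



open SPartOn in
/-- pairs `r ∈ P^{(m)}(1, ∘•)`, `s ∈ P^{(m)}(1, •∘)` satisfying the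
conjugate equations `(r* ⊗ id_∘)·(id_∘ ⊗ s) = id_∘` and
`(s* ⊗ id_•)·(id_• ⊗ r) = id_•` are exactly those of the form `r = σ_{∘•}`,
`s = (σ⁻¹)_{•∘}` for a permutation `σ ∈ S_m`. -/
theorem stmt7 (m : ℕ) (r : SPartOn m [] [false, true]) (s : SPartOn m [] [true, false]) :
    (comp (tensor (SPartOn.star r) (idPart m [false]) :
            SPartOn m [false, true, false] [false])
          (tensor (idPart m [false]) s : SPartOn m [false] [false, true, false]) =
        idPart m [false] ∧
      comp (tensor (SPartOn.star s) (idPart m [true]) :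
            SPartOn m [true, false, true] [true])
          (tensor (idPart m [true]) r : SPartOn m [true] [true, false, true]) =
        idPart m [true]) ↔
      ∃ σ : Equiv.Perm (Fin m),
        r = sigmaPart m σ false true ∧ s = sigmaPart m σ⁻¹ true false := by
  constructor
  · rintro ⟨H1, H2⟩
    have A1 : Triv0 r := claimA r s H1
    have B1 : Triv1 s := claimB r s H1
    have A2 : Triv0 s := claimA s r H2
    have B2 : Triv1 r := claimB s r H2
    have C := claimC r s H1 A2 B1
    choose f hrf hsf using C
    have hinj : Function.Injective f := by
      intro k k' h
      refine A1 k k' (r.rel.iseqv.trans (hrf k) ?_)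
      rw [h]
      exact r.rel.iseqv.symm (hrf k')
    let σ : Equiv.Perm (Fin m) := Equiv.ofBijective f (Finite.injective_iff_bijective.mp hinj)
    have hs' : ∀ j, s.rel.r (.inr ⟨0, by simp⟩, j) (.inr ⟨1, by simp⟩, σ⁻¹ j) := by
      intro j
      have h0 := hsf (σ⁻¹ j)
      rw [show f (σ⁻¹ j) = j from Equiv.apply_symm_apply σ j] at h0
      exact h0
    refine ⟨σ, ?_, ?_⟩
    · apply SPext
      intro a b
      obtain ⟨ia, ka⟩ := a
      obtain ⟨ib, kb⟩ := b
      rcases ia with ia | ia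
      · exact ia.elim0
      rcases ib with ib | ib
      · exact ib.elim0
      rcases ia with ⟨(_|(_|iv)), hi⟩
      · rcases ib with ⟨(_|(_|jv)), hj⟩
        · -- (0,0)
          refine ⟨fun h => ?_, fun h => ?_⟩
          · show σ ka = σ kb
            exact congrArg σ (A1 _ _ h)
          · have h' : σ ka = σ kb := h
            have hk : ka = kb := σ.injective h'
            subst hk
            exact r.rel.iseqv.refl _
        · -- (0,1)
          refine ⟨fun h => ?_, fun h => ?_⟩
          · show σ ka = kb
            exact (B2 kb (f ka) (r.rel.iseqv.trans (r.rel.iseqv.symm h) (hrf ka))).symm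
          · have h' : f ka = kb := h
            subst h'
            exact hrf ka
        · exact absurd (show jv + 2 < 2 from hj) (by omega)
      · rcases ib with ⟨(_|(_|jv)), hj⟩
        · -- (1,0)
          refine ⟨fun h => ?_, fun h => ?_⟩
          · show ka = σ kb
            exact B2 ka (f kb) (r.rel.iseqv.trans h (hrf kb))
          · have h' : ka = f kb := h
            subst h'
            exact r.rel.iseqv.symm (hrf kb)
        · -- (1,1)
          refine ⟨fun h => B2 _ _ h, fun h => ?_⟩
          have h' : ka = kb := h
          subst h'
          exact r.rel.iseqv.refl _
        · exact absurd (show jv + 2 < 2 from hj) (by omega)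
      · exact absurd (show iv + 2 < 2 from hi) (by omega)
    · apply SPext
      intro a b
      obtain ⟨ia, ka⟩ := a
      obtain ⟨ib, kb⟩ := b
      rcases ia with ia | ia
      · exact ia.elim0
      rcases ib with ib | ib
      · exact ib.elim0
      rcases ia with ⟨(_|(_|iv)), hi⟩
      · rcases ib with ⟨(_|(_|jv)), hj⟩
        · -- (0,0)
          refine ⟨fun h => ?_, fun h => ?_⟩
          · show σ⁻¹ ka = σ⁻¹ kb
            exact congrArg (fun x => σ⁻¹ x) (A2 _ _ h)
          · have h' : σ⁻¹ ka = σ⁻¹ kb := h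
            have hk : ka = kb := (Equiv.injective σ⁻¹) h'
            subst hk
            exact s.rel.iseqv.refl _
        · -- (0,1)
          refine ⟨fun h => ?_, fun h => ?_⟩
          · show σ⁻¹ ka = kb
            exact (B1 kb (σ⁻¹ ka) (s.rel.iseqv.trans (s.rel.iseqv.symm h) (hs' ka))).symm
          · have h' : σ⁻¹ ka = kb := h
            subst h'
            exact hs' ka
        · exact absurd (show jv + 2 < 2 from hj) (by omega)
      · rcases ib with ⟨(_|(_|jv)), hj⟩
        · -- (1,0)
          refine ⟨fun h => ?_, fun h => ?_⟩
          · show ka = σ⁻¹ kb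
            exact B1 ka (σ⁻¹ kb) (s.rel.iseqv.trans h (hs' kb))
          · have h' : ka = σ⁻¹ kb := h
            subst h'
            exact s.rel.iseqv.symm (hs' kb)
        · -- (1,1)
          refine ⟨fun h => B1 _ _ h, fun h => ?_⟩
          have h' : ka = kb := h
          subst h'
          exact s.rel.iseqv.refl _
        · exact absurd (show jv + 2 < 2 from hj) (by omega)
      · exact absurd (show iv + 2 < 2 from hi) (by omega)
  · rintro ⟨σ, rfl, rfl⟩
    constructor
    · exact eq_of_sigma σ
    · have h := eq_of_sigma (c := true) (d := false) (σ⁻¹ : Equiv.Perm (Fin m))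
      rw [inv_inv] at h
      exact h
end

section
/- If C ⊆ P^{(m)} is a category of spatial partitions that is rigid (contains duality partitions r ∈ C(1,∘•), s ∈ C(1,•∘) satisfying the conjugate equations) and σ, τ ∈ S_m, then Perm_{σ,τ}(C) is again a rigid category of spatial partitions. -/
namespace SPartOn

/-- A category of spatial partitions on `m` levels: contains `id_∘`, `id_•` and is
closed under composition, tensor products and involutions. -/
def IsCategory (m : ℕ) (C : ∀ x y : List Bool, Set (SPartOn m x y)) : Prop :=
  idPart m [false] ∈ C [false] [false] ∧
  idPart m [true] ∈ C [true] [true] ∧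
  (∀ (x y z : List Bool) (p : SPartOn m y z) (q : SPartOn m x y),
    p ∈ C y z → q ∈ C x y → comp p q ∈ C x z) ∧
  (∀ (x y w z : List Bool) (p : SPartOn m x y) (q : SPartOn m w z),
    p ∈ C x y → q ∈ C w z → tensor p q ∈ C (x ++ w) (y ++ z)) ∧
  (∀ (x y : List Bool) (p : SPartOn m x y), p ∈ C x y → SPartOn.star p ∈ C y x)

/-- Rigidity: the category contains duality partitions `r ∈ C(1, ∘•)` and
`s ∈ C(1, •∘)` satisfying the conjugate equations. -/
def Rigid (m : ℕ) (C : ∀ x y : List Bool, Set (SPartOn m x y)) : Prop :=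
  ∃ r ∈ C [] [false, true], ∃ s ∈ C [] [true, false],
    comp (tensor (SPartOn.star r) (idPart m [false]) :
          SPartOn m [false, true, false] [false])
        (tensor (idPart m [false]) s : SPartOn m [false] [false, true, false]) =
      idPart m [false] ∧
    comp (tensor (SPartOn.star s) (idPart m [true]) :
          SPartOn m [true, false, true] [true])
        (tensor (idPart m [true]) r : SPartOn m [true] [true, false, true]) =
      idPart m [true]

/-- The invertible one-column permutation partition `σ^c_d`. -/
def permPart (m : ℕ) (σ : Equiv.Perm (Fin m)) (c d : Bool) : SPartOn m [c] [d] :=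
  ⟨Setoid.ker
    (fun a : (Fin ([c] : List Bool).length ⊕ Fin ([d] : List Bool).length) × Fin m =>
      Sum.elim (fun _ => σ a.2) (fun _ => a.2) a.1)⟩

/-- The partition `q^x_{σ,τ}`. -/
def qword (m : ℕ) (σ τ : Equiv.Perm (Fin m)) : (x : List Bool) → SPartOn m x x
  | [] => ⟨⊥⟩
  | c :: rest => tensor (permPart m (if c then τ else σ) c c) (qword m σ τ rest)

/-- The functor `Perm_{σ,τ}` permuting levels of white points by `σ` and of black
points by `τ`. -/
def PermF (m : ℕ) (σ τ : Equiv.Perm (Fin m)) {x y : List Bool} (p : SPartOn m x y) :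
    SPartOn m x y :=
  comp (qword m σ τ y) (comp p (qword m σ⁻¹ τ⁻¹ x))

end SPartOn

namespace SPartOn

variable {m : ℕ}

lemma rel_ext {x y : List Bool} {p q : SPartOn m x y}
    (h : ∀ a b, p.rel a b ↔ q.rel a b) : p = q := by
  cases p; cases q
  simp only [mk.injEq]
  exact Setoid.ext h

/-- The permutation attached to a color. -/
def cpm (σ τ : Equiv.Perm (Fin m)) (c : Bool) : Equiv.Perm (Fin m) := if c then τ else σ

lemma cpm_inv (σ τ : Equiv.Perm (Fin m)) (c : Bool) : cpm σ⁻¹ τ⁻¹ c = (cpm σ τ c)⁻¹ := by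
  cases c <;> rfl

/-- The level relabeling map on points. -/
def gmap (σ τ : Equiv.Perm (Fin m)) (x y : List Bool)
    (a : (Fin x.length ⊕ Fin y.length) × Fin m) : (Fin x.length ⊕ Fin y.length) × Fin m :=
  (a.1, cpm σ τ (Sum.elim x.get y.get a.1) a.2)

lemma gmap_gmap_inv (σ τ : Equiv.Perm (Fin m)) (x y : List Bool) (a) :
    gmap σ τ x y (gmap σ⁻¹ τ⁻¹ x y a) = a := by
  simp [gmap, cpm_inv]

lemma gmap_inv_gmap (σ τ : Equiv.Perm (Fin m)) (x y : List Bool) (a) :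
    gmap σ⁻¹ τ⁻¹ x y (gmap σ τ x y a) = a := by
  have := gmap_gmap_inv σ⁻¹ τ⁻¹ x y a
  simpa using this

lemma splitIdx_val (x w : List Bool) (i : Fin (x ++ w).length) :
    Sum.elim (fun j : Fin x.length => (j : ℕ)) (fun j : Fin w.length => x.length + (j : ℕ))
      (splitIdx x w i) = (i : ℕ) := by
  rcases hs : splitIdx x w i with j | j
  · have h : finSumFinEquiv (Sum.inl j : Fin x.length ⊕ Fin w.length)
        = Fin.cast (by simp) i := by
      rw [← hs]; exact finSumFinEquiv.apply_symm_apply _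
    have := congrArg Fin.val h
    simpa using this
  · have h : finSumFinEquiv (Sum.inr j : Fin x.length ⊕ Fin w.length)
        = Fin.cast (by simp) i := by
      rw [← hs]; exact finSumFinEquiv.apply_symm_apply _
    have := congrArg Fin.val h
    simpa using this

lemma splitIdx_get (x w : List Bool) (i : Fin (x ++ w).length) :
    (x ++ w).get i = Sum.elim x.get w.get (splitIdx x w i) := by
  have hv := splitIdx_val x w i
  rcases hs : splitIdx x w i with j | j <;> rw [hs] at hv <;> simp only [Sum.elim_inl, Sum.elim_inr] at hv
  · simp only [List.get_eq_getElem, Sum.elim_inl]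
    rw [List.getElem_append_left (by omega)]
    congr 1
    omega
  · simp only [List.get_eq_getElem, Sum.elim_inr]
    rw [List.getElem_append_right (by omega)]
    congr 1
    omega

/-- The numerical column index of a point. -/
def nidx {n k : ℕ} : Fin n ⊕ Fin k → ℕ := Sum.elim Fin.val Fin.val

/-- The level of the `p`-side endpoint of the strand through a point of `qword`. -/
def qlvl (σ τ : Equiv.Perm (Fin m)) (x : List Bool)
    (a : (Fin x.length ⊕ Fin x.length) × Fin m) : Fin m :=
  Sum.elim (fun i => cpm σ τ (x.get i) a.2) (fun _ => a.2) a.1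

lemma sumSetoid_inl_inl {α β : Type*} (s : Setoid α) (t : Setoid β) (a b : α) :
    (sumSetoid s t) (.inl a) (.inl b) ↔ s a b := Iff.rfl

lemma sumSetoid_inr_inr {α β : Type*} (s : Setoid α) (t : Setoid β) (a b : β) :
    (sumSetoid s t) (.inr a) (.inr b) ↔ t a b := Iff.rfl

lemma sumSetoid_inl_inr {α β : Type*} (s : Setoid α) (t : Setoid β) (a : α) (b : β) :
    (sumSetoid s t) (.inl a) (.inr b) ↔ False := Iff.rfl

lemma sumSetoid_inr_inl {α β : Type*} (s : Setoid α) (t : Setoid β) (a : β) (b : α) :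
    (sumSetoid s t) (.inr a) (.inl b) ↔ False := Iff.rfl

lemma qword_rel (σ τ : Equiv.Perm (Fin m)) (x : List Bool) : ∀ a b,
    (qword m σ τ x).rel a b ↔
      (nidx a.1 = nidx b.1 ∧ qlvl σ τ x a = qlvl σ τ x b) := by
  induction x with
  | nil => rintro ⟨(i | i), k⟩ b <;> exact i.elim0
  | cons c rest ih =>
    rintro ⟨s, k⟩ ⟨t, l⟩
    show (sumSetoid (permPart m (if c then τ else σ) c c).rel (qword m σ τ rest).rel)
        (tensorMap [c] [c] rest rest m (s, k)) (tensorMap [c] [c] rest rest m (t, l)) ↔ _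
    rcases s with i | i <;> rcases t with j | j <;>
      (have hvi := splitIdx_val [c] rest i
       have hvj := splitIdx_val [c] rest j
       have hgi := splitIdx_get [c] rest i
       have hgj := splitIdx_get [c] rest j
       rcases hi : splitIdx [c] rest i with i' | i' <;>
         rcases hj : splitIdx [c] rest j with j' | j' <;>
         rw [hi] at hvi hgi <;> rw [hj] at hvj hgj <;>
         simp only [Sum.elim_inl, Sum.elim_inr, List.length_singleton, List.length_cons,
           List.length_nil, List.cons_append, List.nil_append, List.get_eq_getElem, List.getElem_singleton]
           at hvi hvj hgi hgj <;>
         simp only [tensorMap, hi, hj, sumSetoid_inl_inl, sumSetoid_inl_inr, sumSetoid_inr_inl,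
           sumSetoid_inr_inr, nidx, qlvl, Sum.elim_inl, Sum.elim_inr, ih, permPart,
           Setoid.ker_def, cpm, List.get_eq_getElem] <;>
         (have hbi := i'.isLt
          have hbj := j'.isLt
          try simp only [List.length_singleton] at hbi
          try simp only [List.length_singleton] at hbj
          first
            | (simp only [false_iff]; rintro ⟨h1, -⟩; omega)
            | (try simp only [hgi, hgj]
               exact ⟨fun h => ⟨by omega, h⟩, fun h => h.2⟩)
            | (try simp only [hgi, hgj]
               exact ⟨fun ⟨h1, h2⟩ => ⟨by omega, h2⟩, fun ⟨h1, h2⟩ => ⟨by omega, h2⟩⟩)))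

lemma comp_rel_iff {x y z : List Bool} (p : SPartOn m y z) (q : SPartOn m x y) (a b) :
    (comp p q).rel a b ↔
      ∀ s : Setoid ((Fin x.length ⊕ Fin y.length ⊕ Fin z.length) × Fin m),
        (∀ u v, liftRel (fun a => (Sum.map id Sum.inl a.1, a.2)) q.rel u v → s u v) →
        (∀ u v, liftRel (fun a => (Sum.inr a.1, a.2)) p.rel u v → s u v) →
        s (Sum.map id Sum.inr a.1, a.2) (Sum.map id Sum.inr b.1, b.2) := by
  constructor
  · intro h s h1 h2; exact h s ⟨h1, h2⟩
  · intro h s hs; exact h s hs.1 hs.2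

/-- Upper-level relabeling. -/
def fup (σ' τ' : Equiv.Perm (Fin m)) (x z : List Bool)
    (a : (Fin x.length ⊕ Fin z.length) × Fin m) : (Fin x.length ⊕ Fin z.length) × Fin m :=
  (a.1, Sum.elim (fun i => cpm σ' τ' (x.get i) a.2) (fun _ => a.2) a.1)

/-- Lower-level relabeling. -/
def flo (σ τ : Equiv.Perm (Fin m)) (x z : List Bool)
    (a : (Fin x.length ⊕ Fin z.length) × Fin m) : (Fin x.length ⊕ Fin z.length) × Fin m :=
  (a.1, Sum.elim (fun _ => a.2) (fun j => (cpm σ τ (z.get j))⁻¹ a.2) a.1)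

lemma comp_qword_top (σ' τ' : Equiv.Perm (Fin m)) {x z : List Bool} (p : SPartOn m x z)
    (a b : (Fin x.length ⊕ Fin z.length) × Fin m) :
    (comp p (qword m σ' τ' x)).rel a b ↔ p.rel (fup σ' τ' x z a) (fup σ' τ' x z b) := by
  rw [comp_rel_iff]
  constructor
  · intro h
    have key := h (Setoid.comap (fun t =>
        (Sum.elim (fun i => (Sum.inl i : Fin x.length ⊕ Fin z.length)) (Sum.elim Sum.inl Sum.inr) t.1,
         Sum.elim (fun i => cpm σ' τ' (x.get i) t.2) (fun _ => t.2) t.1)) p.rel) ?g1 ?g2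
    · obtain ⟨sa, ka⟩ := a; obtain ⟨sb, kb⟩ := b
      rcases sa with i | i <;> rcases sb with j | j <;> exact key
    case g1 =>
      rintro u v ⟨⟨u1, ku⟩, ⟨v1, kv⟩, hq, rfl, rfl⟩
      obtain ⟨h1, h2⟩ := (qword_rel σ' τ' x _ _).1 hq
      rcases u1 with i | i <;> rcases v1 with j | j <;>
        (simp only [nidx, qlvl, Sum.elim_inl, Sum.elim_inr] at h1 h2
         show p.rel _ _
         simp only [Sum.map_inl, Sum.map_inr, Sum.elim_inl, Sum.elim_inr, id_eq]
         have hij : i = j := Fin.ext h1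
         subst hij
         rw [h2]) <;>
        exact p.rel.refl' _
    case g2 =>
      rintro u v ⟨⟨u1, ku⟩, ⟨v1, kv⟩, hp, rfl, rfl⟩
      rcases u1 with i | i <;> rcases v1 with j | j <;>
        (show p.rel _ _; simpa only [Sum.elim_inl, Sum.elim_inr] using hp)
  · intro h s h1 h2
    have step1 : ∀ c : (Fin x.length ⊕ Fin z.length) × Fin m,
        s (Sum.map id Sum.inr c.1, c.2)
          (Sum.inr (fup σ' τ' x z c).1, (fup σ' τ' x z c).2) := by
      rintro ⟨(i | j), k⟩
      · exact h1 _ _ ⟨(Sum.inl i, k), (Sum.inr i, cpm σ' τ' (x.get i) k),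
          (qword_rel σ' τ' x _ _).2 ⟨rfl, rfl⟩, rfl, rfl⟩
      · exact s.refl' _
    have step2 : s (Sum.inr (fup σ' τ' x z a).1, (fup σ' τ' x z a).2)
        (Sum.inr (fup σ' τ' x z b).1, (fup σ' τ' x z b).2) :=
      h2 _ _ ⟨fup σ' τ' x z a, fup σ' τ' x z b, h, rfl, rfl⟩
    exact s.trans' (step1 a) (s.trans' step2 (s.symm' (step1 b)))

lemma comp_qword_bot (σ τ : Equiv.Perm (Fin m)) {x z : List Bool} (r : SPartOn m x z)
    (a b : (Fin x.length ⊕ Fin z.length) × Fin m) :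
    (comp (qword m σ τ z) r).rel a b ↔ r.rel (flo σ τ x z a) (flo σ τ x z b) := by
  rw [comp_rel_iff]
  constructor
  · intro h
    have key := h (Setoid.comap (fun t =>
        (Sum.elim (fun i => (Sum.inl i : Fin x.length ⊕ Fin z.length)) (Sum.elim Sum.inr Sum.inr) t.1,
         Sum.elim (fun _ => t.2)
           (Sum.elim (fun _ => t.2) (fun j => (cpm σ τ (z.get j))⁻¹ t.2)) t.1)) r.rel) ?g1 ?g2
    · obtain ⟨sa, ka⟩ := a; obtain ⟨sb, kb⟩ := b
      rcases sa with i | i <;> rcases sb with j | j <;> exact key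
    case g1 =>
      rintro u v ⟨⟨u1, ku⟩, ⟨v1, kv⟩, hr, rfl, rfl⟩
      rcases u1 with i | i <;> rcases v1 with j | j <;>
        (show r.rel _ _; simpa only [Sum.map_inl, Sum.map_inr, id_eq, Sum.elim_inl, Sum.elim_inr] using hr)
    case g2 =>
      rintro u v ⟨⟨u1, ku⟩, ⟨v1, kv⟩, hq, rfl, rfl⟩
      obtain ⟨h1, h2⟩ := (qword_rel σ τ z _ _).1 hq
      rcases u1 with i | i <;> rcases v1 with j | j <;>
        (simp only [nidx, qlvl, Sum.elim_inl, Sum.elim_inr] at h1 h2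
         show r.rel _ _
         simp only [Sum.map_inl, Sum.map_inr, Sum.elim_inl, Sum.elim_inr, id_eq]
         have hij : i = j := Fin.ext h1
         subst hij) <;>
        (first
          | rw [(cpm σ τ (z.get i)).injective h2]
          | rw [← h2, Equiv.Perm.inv_def, Equiv.symm_apply_apply]
          | rw [h2, Equiv.Perm.inv_def, Equiv.symm_apply_apply]
          | rw [h2]
          | rw [← h2]) <;>
        try exact r.rel.refl' _
  · intro h s h1 h2
    have step1 : ∀ c : (Fin x.length ⊕ Fin z.length) × Fin m,
        s (Sum.map id Sum.inr c.1, c.2)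
          (Sum.map id Sum.inl (flo σ τ x z c).1, (flo σ τ x z c).2) := by
      rintro ⟨(i | j), k⟩
      · exact s.refl' _
      · exact s.symm' (h2 _ _ ⟨(Sum.inl j, (cpm σ τ (z.get j))⁻¹ k), (Sum.inr j, k),
          (qword_rel σ τ z _ _).2 ⟨rfl, by
            show cpm σ τ (z.get j) ((cpm σ τ (z.get j))⁻¹ k) = k
            exact Equiv.apply_symm_apply _ _⟩, rfl, rfl⟩)
    have step2 : s (Sum.map id Sum.inl (flo σ τ x z a).1, (flo σ τ x z a).2)
        (Sum.map id Sum.inl (flo σ τ x z b).1, (flo σ τ x z b).2) :=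
      h1 _ _ ⟨flo σ τ x z a, flo σ τ x z b, h, rfl, rfl⟩
    exact s.trans' (step1 a) (s.trans' step2 (s.symm' (step1 b)))

lemma PermF_rel (σ τ : Equiv.Perm (Fin m)) {x y : List Bool} (p : SPartOn m x y) (a b) :
    (PermF m σ τ p).rel a b ↔ p.rel (gmap σ⁻¹ τ⁻¹ x y a) (gmap σ⁻¹ τ⁻¹ x y b) := by
  show (comp (qword m σ τ y) (comp p (qword m σ⁻¹ τ⁻¹ x))).rel a b ↔ _
  rw [comp_qword_bot, comp_qword_top]
  have key : ∀ c, fup σ⁻¹ τ⁻¹ x y (flo σ τ x y c) = gmap σ⁻¹ τ⁻¹ x y c := by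
    rintro ⟨(i | j), k⟩
    · rfl
    · simp [fup, flo, gmap, cpm_inv]
  rw [key a, key b]

lemma PermF_id (σ τ : Equiv.Perm (Fin m)) (x : List Bool) :
    PermF m σ τ (idPart m x) = idPart m x := by
  apply rel_ext; intro a b
  rw [PermF_rel]
  obtain ⟨sa, ka⟩ := a; obtain ⟨sb, kb⟩ := b
  rcases sa with i | i <;> rcases sb with j | j <;>
    simp only [idPart, gmap, Setoid.ker_def, Sum.elim_inl, Sum.elim_inr, id_eq,
      Prod.mk.injEq] <;> unfold idPart <;> simp only [Setoid.ker_def, Sum.elim_inl, Sum.elim_inr, id_eq,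
      Prod.mk.injEq] <;>
    exact ⟨fun ⟨h1, h2⟩ => ⟨h1, by subst h1; exact (cpm σ⁻¹ τ⁻¹ (x.get i)).injective h2⟩,
           fun ⟨h1, h2⟩ => ⟨h1, by subst h1; rw [h2]⟩⟩

lemma PermF_star (σ τ : Equiv.Perm (Fin m)) {x y : List Bool} (p : SPartOn m x y) :
    PermF m σ τ (SPartOn.star p) = SPartOn.star (PermF m σ τ p) := by
  apply rel_ext; intro a b
  rw [PermF_rel]
  have key : ∀ c : (Fin y.length ⊕ Fin x.length) × Fin m,
      ((gmap σ⁻¹ τ⁻¹ y x c).1.swap, (gmap σ⁻¹ τ⁻¹ y x c).2)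
        = gmap σ⁻¹ τ⁻¹ x y (c.1.swap, c.2) := by
    rintro ⟨(i | j), k⟩ <;> rfl
  show p.rel ((gmap σ⁻¹ τ⁻¹ y x a).1.swap, (gmap σ⁻¹ τ⁻¹ y x a).2)
      ((gmap σ⁻¹ τ⁻¹ y x b).1.swap, (gmap σ⁻¹ τ⁻¹ y x b).2)
    ↔ (PermF m σ τ p).rel (a.1.swap, a.2) (b.1.swap, b.2)
  rw [key a, key b, PermF_rel]

lemma PermF_tensor (σ τ : Equiv.Perm (Fin m)) {x y w z : List Bool}
    (p : SPartOn m x y) (q : SPartOn m w z) :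
    PermF m σ τ (tensor p q) = tensor (PermF m σ τ p) (PermF m σ τ q) := by
  apply rel_ext; intro a b
  rw [PermF_rel]
  have key : ∀ c : (Fin (x ++ w).length ⊕ Fin (y ++ z).length) × Fin m,
      tensorMap x y w z m (gmap σ⁻¹ τ⁻¹ (x ++ w) (y ++ z) c)
        = Sum.map (gmap σ⁻¹ τ⁻¹ x y) (gmap σ⁻¹ τ⁻¹ w z) (tensorMap x y w z m c) := by
    rintro ⟨(i | j), k⟩
    · have hg := splitIdx_get x w i
      rcases hi : splitIdx x w i with i' | i' <;> rw [hi] at hg <;>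
        simp only [Sum.elim_inl, Sum.elim_inr] at hg <;>
        simp only [tensorMap, gmap, hi, Sum.elim_inl, Sum.elim_inr, Sum.map_inl, Sum.map_inr, hg]
    · have hg := splitIdx_get y z j
      rcases hj : splitIdx y z j with j' | j' <;> rw [hj] at hg <;>
        simp only [Sum.elim_inl, Sum.elim_inr] at hg <;>
        simp only [tensorMap, gmap, hj, Sum.elim_inl, Sum.elim_inr, Sum.map_inl, Sum.map_inr, hg]
  show (sumSetoid p.rel q.rel) (tensorMap x y w z m (gmap σ⁻¹ τ⁻¹ (x ++ w) (y ++ z) a))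
        (tensorMap x y w z m (gmap σ⁻¹ τ⁻¹ (x ++ w) (y ++ z) b))
      ↔ (sumSetoid (PermF m σ τ p).rel (PermF m σ τ q).rel)
        (tensorMap x y w z m a) (tensorMap x y w z m b)
  rw [key a, key b]
  rcases hta : tensorMap x y w z m a with u | u <;>
    rcases htb : tensorMap x y w z m b with v | v <;>
    simp only [Sum.map_inl, Sum.map_inr, sumSetoid_inl_inl, sumSetoid_inl_inr,
      sumSetoid_inr_inl, sumSetoid_inr_inr, PermF_rel]

/-- Level relabeling on the three-row point set. -/
def g3 (σ τ : Equiv.Perm (Fin m)) (x y z : List Bool)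
    (t : (Fin x.length ⊕ Fin y.length ⊕ Fin z.length) × Fin m) :
    (Fin x.length ⊕ Fin y.length ⊕ Fin z.length) × Fin m :=
  (t.1, cpm σ τ (Sum.elim x.get (Sum.elim y.get z.get) t.1) t.2)

lemma g3_g3_inv (σ τ : Equiv.Perm (Fin m)) (x y z : List Bool) (t) :
    g3 σ τ x y z (g3 σ⁻¹ τ⁻¹ x y z t) = t := by
  simp [g3, cpm_inv]

lemma g3_inv_g3 (σ τ : Equiv.Perm (Fin m)) (x y z : List Bool) (t) :
    g3 σ⁻¹ τ⁻¹ x y z (g3 σ τ x y z t) = t := by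
  have := g3_g3_inv σ⁻¹ τ⁻¹ x y z t
  simpa using this

lemma e_top (σ' τ' : Equiv.Perm (Fin m)) (x y z : List Bool)
    (c : (Fin x.length ⊕ Fin z.length) × Fin m) :
    ((Sum.map id Sum.inr (gmap σ' τ' x z c).1, (gmap σ' τ' x z c).2)
      : (Fin x.length ⊕ Fin y.length ⊕ Fin z.length) × Fin m)
      = g3 σ' τ' x y z (Sum.map id Sum.inr c.1, c.2) := by
  rcases c with ⟨(i | j), k⟩ <;> rfl

lemma e_q (σ' τ' : Equiv.Perm (Fin m)) (x y z : List Bool)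
    (c : (Fin x.length ⊕ Fin y.length) × Fin m) :
    ((Sum.map id Sum.inl (gmap σ' τ' x y c).1, (gmap σ' τ' x y c).2)
      : (Fin x.length ⊕ Fin y.length ⊕ Fin z.length) × Fin m)
      = g3 σ' τ' x y z (Sum.map id Sum.inl c.1, c.2) := by
  rcases c with ⟨(i | j), k⟩ <;> rfl

lemma e_p (σ' τ' : Equiv.Perm (Fin m)) (x y z : List Bool)
    (c : (Fin y.length ⊕ Fin z.length) × Fin m) :
    ((Sum.inr (gmap σ' τ' y z c).1, (gmap σ' τ' y z c).2)
      : (Fin x.length ⊕ Fin y.length ⊕ Fin z.length) × Fin m)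
      = g3 σ' τ' x y z (Sum.inr c.1, c.2) := by
  rcases c with ⟨(i | j), k⟩ <;> rfl

lemma PermF_comp (σ τ : Equiv.Perm (Fin m)) {x y z : List Bool}
    (p : SPartOn m y z) (q : SPartOn m x y) :
    PermF m σ τ (comp p q) = comp (PermF m σ τ p) (PermF m σ τ q) := by
  apply rel_ext; intro a b
  rw [PermF_rel, comp_rel_iff, comp_rel_iff]
  constructor
  · intro h s' h1' h2'
    have key := h (Setoid.comap (g3 σ τ x y z) s') ?g1 ?g2
    · have e1a := e_top σ⁻¹ τ⁻¹ x y z a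
      have e1b := e_top σ⁻¹ τ⁻¹ x y z b
      rw [Setoid.comap_rel, e1a, e1b, g3_g3_inv, g3_g3_inv] at key
      exact key
    case g1 =>
      rintro u v ⟨u0, v0, hq, rfl, rfl⟩
      rw [Setoid.comap_rel, ← e_q σ τ x y z u0, ← e_q σ τ x y z v0]
      refine h1' _ _ ⟨gmap σ τ x y u0, gmap σ τ x y v0, ?_, rfl, rfl⟩
      rw [PermF_rel, gmap_inv_gmap, gmap_inv_gmap]
      exact hq
    case g2 =>
      rintro u v ⟨u0, v0, hp, rfl, rfl⟩
      rw [Setoid.comap_rel, ← e_p σ τ x y z u0, ← e_p σ τ x y z v0]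
      refine h2' _ _ ⟨gmap σ τ y z u0, gmap σ τ y z v0, ?_, rfl, rfl⟩
      rw [PermF_rel, gmap_inv_gmap, gmap_inv_gmap]
      exact hp
  · intro h s g1 g2
    have key := h (Setoid.comap (g3 σ⁻¹ τ⁻¹ x y z) s) ?g1 ?g2
    · rw [Setoid.comap_rel, ← e_top σ⁻¹ τ⁻¹ x y z a, ← e_top σ⁻¹ τ⁻¹ x y z b] at key
      exact key
    case g1 =>
      rintro u v ⟨u0, v0, hq, rfl, rfl⟩
      rw [Setoid.comap_rel, ← e_q σ⁻¹ τ⁻¹ x y z u0, ← e_q σ⁻¹ τ⁻¹ x y z v0]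
      refine g1 _ _ ⟨gmap σ⁻¹ τ⁻¹ x y u0, gmap σ⁻¹ τ⁻¹ x y v0, ?_, rfl, rfl⟩
      exact (PermF_rel σ τ q u0 v0).1 hq
    case g2 =>
      rintro u v ⟨u0, v0, hp, rfl, rfl⟩
      rw [Setoid.comap_rel, ← e_p σ⁻¹ τ⁻¹ x y z u0, ← e_p σ⁻¹ τ⁻¹ x y z v0]
      refine g2 _ _ ⟨gmap σ⁻¹ τ⁻¹ y z u0, gmap σ⁻¹ τ⁻¹ y z v0, ?_, rfl, rfl⟩
      exact (PermF_rel σ τ p u0 v0).1 hp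

end SPartOn

open SPartOn in
/-- if `C ⊆ P^{(m)}` is a rigid category of spatial partitions and
`σ, τ ∈ S_m`, then `Perm_{σ,τ}(C)` is again a rigid category of spatial
partitions. -/
theorem stmt19 (m : ℕ) (σ τ : Equiv.Perm (Fin m))
    (C : ∀ x y : List Bool, Set (SPartOn m x y))
    (hC : IsCategory m C) (hR : Rigid m C) :
    IsCategory m (fun x y => PermF m σ τ '' C x y) ∧
    Rigid m (fun x y => PermF m σ τ '' C x y) := by
  obtain ⟨h0w, h0b, hcomp, htens, hstar⟩ := hC
  constructor
  · refine ⟨⟨idPart m [false], h0w, PermF_id σ τ [false]⟩,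
      ⟨idPart m [true], h0b, PermF_id σ τ [true]⟩, ?_, ?_, ?_⟩
    · rintro x y z p q ⟨p0, hp0, rfl⟩ ⟨q0, hq0, rfl⟩
      exact ⟨comp p0 q0, hcomp _ _ _ _ _ hp0 hq0, PermF_comp σ τ p0 q0⟩
    · rintro x y w z p q ⟨p0, hp0, rfl⟩ ⟨q0, hq0, rfl⟩
      exact ⟨tensor p0 q0, htens _ _ _ _ _ _ hp0 hq0, PermF_tensor σ τ p0 q0⟩
    · rintro x y p ⟨p0, hp0, rfl⟩
      exact ⟨SPartOn.star p0, hstar _ _ _ hp0, PermF_star σ τ p0⟩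
  · obtain ⟨r, hr, s, hs, e1, e2⟩ := hR
    refine ⟨PermF m σ τ r, ⟨r, hr, rfl⟩, PermF m σ τ s, ⟨s, hs, rfl⟩, ?_, ?_⟩
    · calc comp (tensor (SPartOn.star (PermF m σ τ r)) (idPart m [false]) :
              SPartOn m [false, true, false] [false])
            (tensor (idPart m [false]) (PermF m σ τ s) :
              SPartOn m [false] [false, true, false])
          = comp (tensor (PermF m σ τ (SPartOn.star r)) (PermF m σ τ (idPart m [false])) :
              SPartOn m [false, true, false] [false])
            (tensor (PermF m σ τ (idPart m [false])) (PermF m σ τ s) :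
              SPartOn m [false] [false, true, false]) := by
            rw [PermF_star, PermF_id]
        _ = PermF m σ τ (comp (tensor (SPartOn.star r) (idPart m [false]) :
              SPartOn m [false, true, false] [false])
              (tensor (idPart m [false]) s : SPartOn m [false] [false, true, false])) := by
            rw [PermF_comp, PermF_tensor, PermF_tensor]
        _ = idPart m [false] := by rw [e1]; exact PermF_id σ τ [false]
    · calc comp (tensor (SPartOn.star (PermF m σ τ s)) (idPart m [true]) :
              SPartOn m [true, false, true] [true])
            (tensor (idPart m [true]) (PermF m σ τ r) :
              SPartOn m [true] [true, false, true])
          = comp (tensor (PermF m σ τ (SPartOn.star s)) (PermF m σ τ (idPart m [true])) :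
              SPartOn m [true, false, true] [true])
            (tensor (PermF m σ τ (idPart m [true])) (PermF m σ τ r) :
              SPartOn m [true] [true, false, true]) := by
            rw [PermF_star, PermF_id]
        _ = PermF m σ τ (comp (tensor (SPartOn.star s) (idPart m [true]) :
              SPartOn m [true, false, true] [true])
              (tensor (idPart m [true]) r : SPartOn m [true] [true, false, true])) := by
            rw [PermF_comp, PermF_tensor, PermF_tensor]
        _ = idPart m [true] := by rw [e2]; exact PermF_id σ τ [true]
end
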